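/- Let p(x,y) = M(x)y² + a(x)y + b(x) and q(x,y) = N(x)y² + c(x)y + d(x) be polynomials in ℝ[x,y], where M,a,b,N,c,d ∈ ℝ[x]. Let R₀(x) be the 0-subresultant in y of p and q (as polynomials in y of formal degree 2), write R₀(x) = b₀ + b₁x + ⋯ + b_l x^l with b_l ≠ 0 its leading coefficient. (Part 1) If (i) R₀(x) has no common real zeros with M(x) and none with N(x), and (ii) there exists z ∈ ℝ with b_l·R₀(z) < 0, then there exists (α,β) ∈ ℝ² with p(α,β) = q(α,β) = 0. (Part 2) If instead of (i) one assumes (i′) R₀(x) has no common real zeros with N(x) and there exists α ∈ ℝ with R₀(α) = M(α) = 0, while keeping (ii), then there exists β ∈ ℝ with p(α,β) = q(α,β) = 0 if and only if a(α) ≠ 0, or p(α,y) is identically zero as a polynomial in y and c(α)² − 4N(α)d(α) ≥ 0. -/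

import Mathlib

/-!
For fixed `x`, `R₀ = (M c - N a)(a d - b c) - (M d - N b)²` is the resultant of the two
quadratics in `y`. At a zero `α` of `R₀` with `N a ≠ M c` the common root
`(M d - N b) / (N a - M c)` is explicit; when `N a = M c` the quadratics are proportional and it
remains to see that `p(α, ·)` has a real root. This follows from
`4 M² R₀ = -(2 M (M d - N b) - a (M c - N a))² + (a² - 4 M b)(M c - N a)²`: the sign condition
makes `R₀` change sign, so by connectedness of `ℝ` some zero `α` of `R₀` is a limit of points
where `R₀ > 0`, and the identity rules out a negative discriminant of `p` near such a point.
When `M(α) = 0`, the equivalence is elementary algebra at the single point `α`.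
-/

/-- The Sylvester matrix of two polynomials of formal degrees `n` and `m`,
given by their coefficient functions `P` and `Q` (`P i` is the coefficient of
`yⁱ`).  Its first `m` rows contain the coefficient vector `(P n, …, P 0)`
successively shifted to the right, and its last `n` rows contain the
coefficient vector `(Q m, …, Q 0)` in reversed shift order. -/
def sylvesterMat {R : Type*} [CommRing R] (n m : ℕ) (P Q : ℕ → R) :
    Matrix (Fin (n + m)) (Fin (n + m)) R :=
  Matrix.of fun i s =>
    if (i : ℕ) < m then
      (if (i : ℕ) ≤ (s : ℕ) ∧ (s : ℕ) ≤ (i : ℕ) + n then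
        P (n - ((s : ℕ) - (i : ℕ))) else 0)
    else
      (if n - 1 - ((i : ℕ) - m) ≤ (s : ℕ) ∧ (s : ℕ) ≤ n - 1 - ((i : ℕ) - m) + m then
        Q (m + n - 1 - ((i : ℕ) - m) - (s : ℕ)) else 0)

/-- The `k`-subresultant: the determinant of the matrix obtained from the
Sylvester matrix by deleting its first `k` and last `k` rows and columns. -/
def subresultant {R : Type*} [CommRing R] (n m : ℕ) (P Q : ℕ → R) (k : ℕ) : R :=
  Matrix.det (Matrix.of fun r c : Fin (n + m - 2 * k) =>
    sylvesterMat n m P Q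
      ⟨k + (r : ℕ), by have := r.isLt; omega⟩
      ⟨k + (c : ℕ), by have := c.isLt; omega⟩)

open Polynomial Filter

def quadResultant {R : Type*} [CommRing R] (m a b n c d : R) : R :=
  (m * c - n * a) * (a * d - b * c) - (m * d - n * b) ^ 2

theorem subresultant_two_two_zero {R : Type*} [CommRing R] (m a b n c d : R) :
    subresultant 2 2
      (fun i => if i = 0 then b else if i = 1 then a else if i = 2 then m else 0)
      (fun i => if i = 0 then d else if i = 1 then c else if i = 2 then n else 0) 0
    = quadResultant m a b n c d := by
  have hmat : subresultant 2 2
      (fun i => if i = 0 then b else if i = 1 then a else if i = 2 then m else 0)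
      (fun i => if i = 0 then d else if i = 1 then c else if i = 2 then n else 0) 0
      = Matrix.det !![m, a, b, 0; 0, m, a, b; 0, n, c, d; n, c, d, 0] := by
    refine congrArg Matrix.det (Matrix.ext fun i j => ?_)
    fin_cases i <;> fin_cases j <;> rfl
  rw [hmat, Matrix.det_succ_row_zero]
  simp [Fin.sum_univ_succ, Matrix.det_fin_three, Fin.succAbove, quadResultant]
  ring

theorem quadResultant_nonpos_of_discrim_neg {K : Type*} [CommRing K] [LinearOrder K]
    [IsStrictOrderedRing K] {m a b n c d : K} (h : discrim m a b < 0) :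
    quadResultant m a b n c d ≤ 0 := by
  have hm : m ≠ 0 := by
    rintro rfl
    exact h.not_ge (by simpa [discrim] using sq_nonneg a)
  -- completing the square in the cross term
  have key : 4 * m ^ 2 * quadResultant m a b n c d =
      -(2 * m * (m * d - n * b) - a * (m * c - n * a)) ^ 2
        + discrim m a b * (m * c - n * a) ^ 2 := by
    unfold quadResultant discrim; ring
  refine nonpos_of_mul_nonpos_right ?_ (by positivity : (0 : K) < 4 * m ^ 2)
  rw [key]
  exact add_nonpos (neg_nonpos.2 (sq_nonneg _)) (mul_nonpos_of_nonpos_of_nonneg h.le (sq_nonneg _))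

theorem exists_quadratic_eq_zero_of_discrim_nonneg {a b c : ℝ} (ha : a ≠ 0)
    (h : 0 ≤ discrim a b c) : ∃ x, a * x ^ 2 + b * x + c = 0 := by
  obtain ⟨x, hx⟩ :=
    exists_quadratic_eq_zero ha ⟨√(discrim a b c), (Real.mul_self_sqrt h).symm⟩
  exact ⟨x, by rw [sq]; exact hx⟩

theorem exists_common_root_of_quadResultant_eq_zero_of_ne {K : Type*} [Field K] {m a b n c d : K}
    (h : quadResultant m a b n c d = 0) (hu : n * a - m * c ≠ 0) :
    ∃ β, m * β ^ 2 + a * β + b = 0 ∧ n * β ^ 2 + c * β + d = 0 := by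
  have hβ : (m * d - n * b) / (n * a - m * c) * (n * a - m * c) = m * d - n * b :=
    div_mul_cancel₀ _ hu
  set β := (m * d - n * b) / (n * a - m * c)
  unfold quadResultant at h
  have hu2 := pow_ne_zero 2 hu
  refine ⟨β, mul_right_cancel₀ hu2 ?_, mul_right_cancel₀ hu2 ?_⟩
  · linear_combination
      (m * (β * (n * a - m * c) + (m * d - n * b)) + a * (n * a - m * c)) * hβ - m * h
  · linear_combination
      (n * (β * (n * a - m * c) + (m * d - n * b)) + c * (n * a - m * c)) * hβ - n * h

section Real

variable {m a b n c d : ℝ}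

theorem exists_common_root_of_quadResultant_eq_zero (hm : m ≠ 0)
    (h : quadResultant m a b n c d = 0) (hdisc : 0 ≤ discrim m a b) :
    ∃ β, m * β ^ 2 + a * β + b = 0 ∧ n * β ^ 2 + c * β + d = 0 := by
  by_cases hu : n * a - m * c = 0
  · -- the two quadratics are proportional
    have hv : m * d - n * b = 0 := by
      unfold quadResultant at h
      exact pow_eq_zero_iff two_ne_zero |>.mp (by linear_combination -h - (a * d - b * c) * hu)
    obtain ⟨β, hβ⟩ := exists_quadratic_eq_zero_of_discrim_nonneg hm hdisc
    exact ⟨β, hβ, mul_left_cancel₀ hm (by linear_combination n * hβ - β * hu + hv)⟩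
  · exact exists_common_root_of_quadResultant_eq_zero_of_ne h hu

theorem exists_common_root_iff_of_quadResultant_eq_zero (hm : m = 0) (hn : n ≠ 0)
    (h : quadResultant m a b n c d = 0) :
    (∃ β, m * β ^ 2 + a * β + b = 0 ∧ n * β ^ 2 + c * β + d = 0) ↔
      a ≠ 0 ∨ ((m = 0 ∧ a = 0 ∧ b = 0) ∧ c ^ 2 - 4 * n * d ≥ 0) := by
  subst hm
  have hr : a ^ 2 * d - a * b * c + n * b ^ 2 = 0 :=
    mul_left_cancel₀ hn (by unfold quadResultant at h; linear_combination -h)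
  constructor
  · rintro ⟨β, hp, hq⟩
    by_cases ha : a = 0
    · have hb : b = 0 := by simpa [ha] using hp
      refine Or.inr ⟨⟨rfl, ha, hb⟩, ?_⟩
      have := discrim_eq_sq_of_quadratic_eq_zero
        (by linear_combination hq : n * (β * β) + c * β + d = 0)
      unfold discrim at this
      rw [this]
      positivity
    · exact Or.inl ha
  · rintro (ha | ⟨⟨-, rfl, rfl⟩, hdisc⟩)
    · refine ⟨-b / a, by field_simp; ring, ?_⟩
      field_simp
      linear_combination hr
    · obtain ⟨β, hβ⟩ := exists_quadratic_eq_zero_of_discrim_nonneg hn hdisc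
      exact ⟨β, by ring, hβ⟩

end Real

theorem exists_eq_mem_closure_lt {X α : Type*} [TopologicalSpace X] [PreconnectedSpace X]
    [TopologicalSpace α] [LinearOrder α] [OrderClosedTopology α] {g : X → α}
    (hg : Continuous g) {c : α} {x₀ x₁ : X} (h₀ : c < g x₀) (h₁ : g x₁ ≤ c) :
    ∃ x, g x = c ∧ x ∈ closure {y | c < g y} := by
  have hopen : IsOpen {y | c < g y} := isOpen_lt continuous_const hg
  have hnclosed : ¬IsClosed {y | c < g y} := fun hclosed => by
    rcases isClopen_iff.mp ⟨hclosed, hopen⟩ with h | h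
    · exact h.subset h₀
    · exact h₁.not_gt (h.symm.subset (Set.mem_univ x₁))
  obtain ⟨x, hx, hxc⟩ : ∃ x ∈ closure {y | c < g y}, ¬c < g x := by
    by_contra! h
    exact hnclosed (isClosed_of_closure_subset h)
  exact ⟨x, le_antisymm (not_lt.1 hxc) (closure_lt_subset_le continuous_const hg hx), hx⟩

theorem Polynomial.exists_eval_mul_eval_neg {K : Type*} [NormedField K] [LinearOrder K]
    [IsStrictOrderedRing K] [OrderTopology K] {P : K[X]} {z : K}
    (h : P.leadingCoeff * P.eval z < 0) : ∃ w, P.eval z * P.eval w < 0 := by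
  have hL : P.leadingCoeff ≠ 0 := by rintro hL; simp [hL] at h
  have hdeg : 0 < P.degree := by
    by_contra! hd
    rw [eq_C_of_degree_le_zero hd] at h
    simp only [leadingCoeff_C, eval_C] at h
    exact (mul_self_nonneg _).not_gt h
  have htends : Tendsto (fun x => (C P.leadingCoeff * P).eval x) atTop atTop :=
    tendsto_atTop_of_leadingCoeff_nonneg _ (by rwa [degree_C_mul hL])
      (by simpa using mul_self_nonneg P.leadingCoeff)
  obtain ⟨w, hw⟩ := (htends.eventually_gt_atTop 0).exists
  rw [eval_mul, eval_C] at hw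
  refine ⟨w, neg_of_mul_neg_right (a := P.leadingCoeff * P.leadingCoeff) ?_ (mul_self_nonneg _)⟩
  linear_combination mul_neg_of_neg_of_pos h hw

/-- Let `p(x,y) = M(x)y² + a(x)y + b(x)` and
`q(x,y) = N(x)y² + c(x)y + d(x)`, and let `R₀(x)` be their `0`-subresultant in
`y` (formal degree `2`), with leading coefficient `b_l`.
Part 1: if `R₀` has no common real zero with `M` nor with `N`, and
`b_l · R₀(z) < 0` for some `z`, then `p` and `q` have a common real zero.
Part 2: if instead `R₀` has no common real zero with `N` and `R₀(α) = M(α) = 0`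
for some `α`, then (keeping the sign condition) there is `β` with
`p(α,β) = q(α,β) = 0` iff `a(α) ≠ 0`, or `p(α,·) ≡ 0` and
`c(α)² − 4N(α)d(α) ≥ 0`. -/
theorem common_zero_deg2_deg2
    (M a b N c d : Polynomial ℝ)
    (R₀ : Polynomial ℝ)
    (hR₀ : R₀ = subresultant 2 2
      (fun i => if i = 0 then b else if i = 1 then a else if i = 2 then M else 0)
      (fun i => if i = 0 then d else if i = 1 then c else if i = 2 then N else 0) 0) :
    (((∀ x : ℝ, ¬(R₀.eval x = 0 ∧ M.eval x = 0)) ∧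
      (∀ x : ℝ, ¬(R₀.eval x = 0 ∧ N.eval x = 0)) ∧
      (∃ z : ℝ, R₀.leadingCoeff * R₀.eval z < 0)) →
      ∃ α β : ℝ,
        M.eval α * β ^ 2 + a.eval α * β + b.eval α = 0 ∧
        N.eval α * β ^ 2 + c.eval α * β + d.eval α = 0) ∧
    (∀ α : ℝ,
      ((∀ x : ℝ, ¬(R₀.eval x = 0 ∧ N.eval x = 0)) ∧
        R₀.eval α = 0 ∧ M.eval α = 0 ∧
        (∃ z : ℝ, R₀.leadingCoeff * R₀.eval z < 0)) →
      ((∃ β : ℝ,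
          M.eval α * β ^ 2 + a.eval α * β + b.eval α = 0 ∧
          N.eval α * β ^ 2 + c.eval α * β + d.eval α = 0) ↔
        (a.eval α ≠ 0 ∨
          ((M.eval α = 0 ∧ a.eval α = 0 ∧ b.eval α = 0) ∧
            (c.eval α) ^ 2 - 4 * N.eval α * d.eval α ≥ 0)))) := by
  have hR₀eval : ∀ x, R₀.eval x =
      quadResultant (M.eval x) (a.eval x) (b.eval x) (N.eval x) (c.eval x) (d.eval x) := by
    intro x
    simp [hR₀, subresultant_two_two_zero, quadResultant]
  refine ⟨fun ⟨hM, _, z, hz⟩ => ?_, fun α ⟨hN, hRα, hMα, _⟩ => ?_⟩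
  · obtain ⟨w, hzw⟩ := exists_eval_mul_eval_neg hz
    obtain ⟨α, hRα, hαpos⟩ :
        ∃ α, R₀.eval α = 0 ∧ α ∈ closure {x | 0 < R₀.eval x} := by
      rcases mul_neg_iff.mp hzw with ⟨hz, hw⟩ | ⟨hz, hw⟩
      exacts [exists_eq_mem_closure_lt R₀.continuous hz hw.le,
        exists_eq_mem_closure_lt R₀.continuous hw hz.le]
    -- near `α` the resultant takes positive values, which a negative discriminant of `p` forbids
    have hdisc : 0 ≤ discrim (M.eval α) (a.eval α) (b.eval α) := by
      by_contra! hneg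
      have hopen : IsOpen {x | discrim (M.eval x) (a.eval x) (b.eval x) < 0} :=
        isOpen_lt (by unfold discrim; fun_prop) continuous_const
      obtain ⟨x, hxneg, hxpos⟩ := mem_closure_iff.mp hαpos _ hopen hneg
      rw [Set.mem_ofPred_eq, hR₀eval] at hxpos
      exact (quadResultant_nonpos_of_discrim_neg hxneg).not_gt hxpos
    exact ⟨α, exists_common_root_of_quadResultant_eq_zero (fun h => hM α ⟨hRα, h⟩)
      ((hR₀eval α).symm.trans hRα) hdisc⟩
  · exact exists_common_root_iff_of_quadResultant_eq_zero hMα (fun h => hN α ⟨hRα, h⟩)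
      ((hR₀eval α).symm.trans hRα)
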